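/- Inside the forward light cone {r < t} in ℝ^{1+n}, the conformal energy density associated to the multiplier K₁u + (n-1)u/2 satisfies the identity: e₁[u] := (1/2)( t(1+(r/t)²)|∂_t u|² + t(1−(r/t)²) Σ_a |∂_a u|² + 2t^{-1} |x^a ∂_a u|² + 4 x^a ∂_t u ∂_a u + ((n-1)/t) u K₁u ) = (1/(2t))|K₁u|² + (t/2)|(x^a/r) ∂̲_a u|² + (s²/(2t)) Σ_{a<b} |r^{-1} Ω_{ab} u|² + ((n-1)/(2t)) u K₁u, where s² = t² − r², K₁ = t∂_t + x^a∂_a, ∂̲_a = (x^a/t)∂_t + ∂_a, and Ω_{ab} = x^a ∂_b − x^b ∂_a. -/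
import Mathlib


noncomputable section

/-- Partial derivative in the `i`-th coordinate direction on `ℝ^m`. -/
def pd {m : ℕ} (u : (Fin m → ℝ) → ℝ) (i : Fin m) (x : Fin m → ℝ) : ℝ :=
  fderiv ℝ u x (Pi.single i 1)

/-- Scaling field `K₁u = t ∂_t u + x^a ∂_a u`. -/
def K1 {n : ℕ} (u : (Fin (n + 1) → ℝ) → ℝ) (p : Fin (n + 1) → ℝ) : ℝ :=
  p 0 * pd u 0 p + ∑ a : Fin n, p a.succ * pd u a.succ p

/-- Hyperbolic derivative `∂̲_a u = (x^a/t) ∂_t u + ∂_a u`. -/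
def hypd {n : ℕ} (u : (Fin (n + 1) → ℝ) → ℝ) (a : Fin n) (p : Fin (n + 1) → ℝ) : ℝ :=
  (p a.succ / p 0) * pd u 0 p + pd u a.succ p

lemma lagrange_aux (n : ℕ) (x y : Fin n → ℝ) :
    ∑ a : Fin n, ∑ b : Fin n, (if a < b then (x a * y b - x b * y a) ^ 2 else 0)
      = (∑ a : Fin n, x a ^ 2) * (∑ a : Fin n, y a ^ 2)
        - (∑ a : Fin n, x a * y a) ^ 2 := by
  have full : ∑ a : Fin n, ∑ b : Fin n, (x a * y b - x b * y a) ^ 2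
      = 2 * ((∑ a : Fin n, x a ^ 2) * (∑ a : Fin n, y a ^ 2)
        - (∑ a : Fin n, x a * y a) ^ 2) := by
    have h1 : ∀ a : Fin n, ∑ b : Fin n, (x a * y b - x b * y a) ^ 2
        = x a ^ 2 * (∑ b : Fin n, y b ^ 2) + (∑ b : Fin n, x b ^ 2) * y a ^ 2
          - 2 * (x a * y a) * (∑ b : Fin n, x b * y b) := by
      intro a
      rw [Finset.mul_sum, Finset.sum_mul, Finset.mul_sum,
        ← Finset.sum_add_distrib, ← Finset.sum_sub_distrib]
      exact Finset.sum_congr rfl fun b _ => by ring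
    simp_rw [h1]
    rw [Finset.sum_sub_distrib, Finset.sum_add_distrib, ← Finset.sum_mul,
      ← Finset.mul_sum, ← Finset.sum_mul,
      show (∑ a : Fin n, 2 * (x a * y a)) = 2 * ∑ a : Fin n, x a * y a from by
        rw [Finset.mul_sum]]
    ring
  have split : ∀ a b : Fin n, (x a * y b - x b * y a) ^ 2
      = (if a < b then (x a * y b - x b * y a) ^ 2 else 0)
        + (if b < a then (x a * y b - x b * y a) ^ 2 else 0) := by
    intro a b
    rcases lt_trichotomy a b with h | h | h
    · simp [h, not_lt_of_gt h]
    · subst h; simp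
    · simp [h, not_lt_of_gt h]
  have sym : ∑ a : Fin n, ∑ b : Fin n, (if b < a then (x a * y b - x b * y a) ^ 2 else 0)
      = ∑ a : Fin n, ∑ b : Fin n, (if a < b then (x a * y b - x b * y a) ^ 2 else 0) := by
    rw [Finset.sum_comm]
    refine Finset.sum_congr rfl fun a _ => Finset.sum_congr rfl fun b _ => ?_
    congr 1
    ring
  have : ∑ a : Fin n, ∑ b : Fin n, (x a * y b - x b * y a) ^ 2
      = 2 * ∑ a : Fin n, ∑ b : Fin n, (if a < b then (x a * y b - x b * y a) ^ 2 else 0) := by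
    have e1 : ∑ a : Fin n, ∑ b : Fin n, (x a * y b - x b * y a) ^ 2
        = ∑ a : Fin n, ∑ b : Fin n,
          ((if a < b then (x a * y b - x b * y a) ^ 2 else 0)
            + (if b < a then (x a * y b - x b * y a) ^ 2 else 0)) :=
      Finset.sum_congr rfl fun a _ => Finset.sum_congr rfl fun b _ => split a b
    rw [e1]
    simp only [Finset.sum_add_distrib]
    rw [sym]; ring
  linarith [full, this]

/-- inside the cone `{0 < r < t}` the conformal energy density
identity holds pointwise:
`e₁[u] = (1/2t)|K₁u|² + (t/2)|(x^a/r)∂̲_au|² + (s²/2t)Σ_{a<b}|r⁻¹Ω_{ab}u|²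
  + ((n-1)/2t) u K₁u`. -/
theorem conformal_energy_density_identity
    (n : ℕ) (hn : 1 ≤ n) (u : (Fin (n + 1) → ℝ) → ℝ) (hu : ContDiff ℝ 1 u)
    (p : Fin (n + 1) → ℝ) (t r s : ℝ)
    (ht : t = p 0)
    (hr : r = Real.sqrt (∑ a : Fin n, (p a.succ) ^ 2))
    (hs : s = Real.sqrt (t ^ 2 - r ^ 2))
    (hr0 : 0 < r) (hrt : r < t) :
    (1 / 2) * (t * (1 + (r / t) ^ 2) * (pd u 0 p) ^ 2 +
        t * (1 - (r / t) ^ 2) * (∑ a : Fin n, (pd u a.succ p) ^ 2) +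
        2 * t⁻¹ * (∑ a : Fin n, p a.succ * pd u a.succ p) ^ 2 +
        4 * (∑ a : Fin n, p a.succ * pd u 0 p * pd u a.succ p) +
        (((n : ℝ) - 1) / t) * u p * K1 u p) =
      (1 / (2 * t)) * (K1 u p) ^ 2 +
        (t / 2) * (∑ a : Fin n, (p a.succ / r) * hypd u a p) ^ 2 +
        (s ^ 2 / (2 * t)) *
          (∑ a : Fin n, ∑ b : Fin n,
            if a < b then
              (r⁻¹ * (p a.succ * pd u b.succ p - p b.succ * pd u a.succ p)) ^ 2
            else 0) +
        (((n : ℝ) - 1) / (2 * t)) * u p * K1 u p := by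
  have ht0 : (0:ℝ) < t := hr0.trans hrt
  have htne : t ≠ 0 := ht0.ne'
  have hrne : r ≠ 0 := hr0.ne'
  set d0 := pd u 0 p with hd0
  set X := ∑ a : Fin n, p a.succ * pd u a.succ p with hX
  set D := ∑ a : Fin n, (pd u a.succ p) ^ 2 with hD
  set P := ∑ a : Fin n, (p a.succ) ^ 2 with hP
  have hP0 : (0:ℝ) ≤ P := Finset.sum_nonneg fun a _ => sq_nonneg _
  have hr2 : r ^ 2 = P := by rw [hr, Real.sq_sqrt hP0]
  have hs2 : s ^ 2 = t ^ 2 - r ^ 2 := by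
    rw [hs, Real.sq_sqrt]
    nlinarith
  -- the hyperbolic derivative sum
  have hhyp : ∑ a : Fin n, (p a.succ / r) * hypd u a p = (r / t) * d0 + X / r := by
    have : ∀ a : Fin n, (p a.succ / r) * hypd u a p
        = (p a.succ) ^ 2 * (d0 / (r * t)) + (p a.succ * pd u a.succ p) * (1 / r) := by
      intro a
      rw [hypd, ← ht, ← hd0]
      field_simp
    simp_rw [this]
    rw [Finset.sum_add_distrib, ← Finset.sum_mul, ← Finset.sum_mul, ← hP, ← hX, ← hr2]
    field_simp
  -- rotation term via Lagrange identity
  have hrot : (∑ a : Fin n, ∑ b : Fin n,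
      if a < b then
        (r⁻¹ * (p a.succ * pd u b.succ p - p b.succ * pd u a.succ p)) ^ 2
      else 0) = r⁻¹ ^ 2 * (P * D - X ^ 2) := by
    have := lagrange_aux n (fun a => p a.succ) (fun a => pd u a.succ p)
    rw [← hP, ← hD, ← hX] at this
    rw [← this, Finset.mul_sum]
    refine Finset.sum_congr rfl fun a _ => ?_
    rw [Finset.mul_sum]
    refine Finset.sum_congr rfl fun b _ => ?_
    rw [mul_ite, mul_zero, mul_pow]
  have h4 : ∑ a : Fin n, p a.succ * pd u 0 p * pd u a.succ p = d0 * X := by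
    rw [hX, Finset.mul_sum]
    exact Finset.sum_congr rfl fun a _ => by rw [← hd0]; ring
  have hK1 : K1 u p = t * d0 + X := by rw [K1, ← ht, ← hd0, ← hX]
  rw [hhyp, hrot, h4, hK1, hs2]
  have hPr : P = r ^ 2 := hr2.symm
  rw [hPr]
  field_simp
  ring
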